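/- arXiv:1709.06964 — 7 statements merged into one kernel-verified Lean document; each statement's English description precedes it below -/
import Mathlib

section
/- Let n be a natural number, let I ⊆ ℝ be an interval, and let Ψ₀, Ω₀, ξ₀ : ℝ → ℝ be differentiable on I. Define, for τ ∈ ℝ and ρ > 0 with τ/ρ ∈ I, the functions Ψ(τ,ρ) = Ψ₀(τ/ρ)/ρ^n, Ω(τ,ρ) = Ω₀(τ/ρ)/ρ, ξ(τ,ρ) = ξ₀(τ/ρ)/ρ. If the consistency relation (∂Ψ/∂τ)(τ,ρ) · Ω(τ,ρ) = (∂Ψ/∂ρ)(τ,ρ) · ξ(τ,ρ) holds for all such (τ,ρ), then for every z ∈ I one has Ψ₀′(z)·(Ω₀(z) + z·ξ₀(z)) = −n·Ψ₀(z)·ξ₀(z). In particular, where Ψ₀(z) ≠ 0 and Ω₀(z) + z·ξ₀(z) ≠ 0, Ψ₀′(z)/Ψ₀(z) = −n·ξ₀(z)/(Ω₀(z) + z·ξ₀(z)). -/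
/-!
With `z = τ / ρ`, the partial derivatives of `Ψ(τ,ρ) = Ψ₀(z)/ρ^n` are
`∂_τ Ψ = Ψ₀′(z)/ρ^(n+1)` and `∂_ρ Ψ = -(z Ψ₀′(z) + n Ψ₀(z))/ρ^(n+1)`. Substituting them, the
consistency relation at `(τ, ρ)` becomes `ρ^(-(n+2))` times the ODE for `Ψ₀` at `z`, so
the relation at `ρ = 1` already gives the ODE at every `z ∈ I`.
-/

theorem HasDerivAt.comp_div_const_div_pow {f : ℝ → ℝ} {f' τ ρ : ℝ} (n : ℕ)
    (hf : HasDerivAt f f' (τ / ρ)) :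
    HasDerivAt (fun t => f (t / ρ) / ρ ^ n) (f' / ρ ^ (n + 1)) τ := by
  have h : HasDerivAt (fun t => f (t / ρ)) (f' * (1 / ρ)) τ :=
    hf.comp τ ((hasDerivAt_id τ).div_const ρ)
  refine (h.div_const (ρ ^ n)).congr_deriv ?_
  rw [pow_succ]
  ring

theorem HasDerivAt.comp_const_div_div_pow {f : ℝ → ℝ} {f' τ ρ : ℝ} (n : ℕ) (hρ : ρ ≠ 0)
    (hf : HasDerivAt f f' (τ / ρ)) :
    HasDerivAt (fun r => f (τ / r) / r ^ n)
      (-(τ / ρ * f' + n * f (τ / ρ)) / ρ ^ (n + 1)) ρ := by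
  have hinv : HasDerivAt (fun r => τ / r) (-τ / ρ ^ 2) ρ := by
    simpa [div_eq_mul_inv, neg_div] using (hasDerivAt_inv hρ).const_mul τ
  have h : HasDerivAt (fun r => f (τ / r)) (f' * (-τ / ρ ^ 2)) ρ := hf.comp ρ hinv
  refine (h.div (hasDerivAt_pow n ρ) (pow_ne_zero n hρ)).congr_deriv ?_
  rcases n with _ | n
  · field_simp; simp; ring
  · simp only [Nat.cast_add, Nat.cast_one, Nat.add_sub_cancel]
    field_simp
    ring

theorem selfSimilar_consistency_iff {n : ℕ} {Ψ₀ Ω₀ ξ₀ : ℝ → ℝ} {τ ρ : ℝ} (hρ : ρ ≠ 0)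
    (hΨ : DifferentiableAt ℝ Ψ₀ (τ / ρ)) :
    deriv (fun t => Ψ₀ (t / ρ) / ρ ^ n) τ * (Ω₀ (τ / ρ) / ρ) =
        deriv (fun r => Ψ₀ (τ / r) / r ^ n) ρ * (ξ₀ (τ / ρ) / ρ) ↔
      deriv Ψ₀ (τ / ρ) * (Ω₀ (τ / ρ) + τ / ρ * ξ₀ (τ / ρ)) =
        -(n : ℝ) * Ψ₀ (τ / ρ) * ξ₀ (τ / ρ) := by
  rw [(hΨ.hasDerivAt.comp_div_const_div_pow n).deriv,
    (hΨ.hasDerivAt.comp_const_div_div_pow n hρ).deriv]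
  set z := τ / ρ
  have hscale : (ρ ^ (n + 2))⁻¹ ≠ 0 := inv_ne_zero (pow_ne_zero _ hρ)
  have hdiff : deriv Ψ₀ z / ρ ^ (n + 1) * (Ω₀ z / ρ) -
        -(z * deriv Ψ₀ z + n * Ψ₀ z) / ρ ^ (n + 1) * (ξ₀ z / ρ) =
      (ρ ^ (n + 2))⁻¹ * (deriv Ψ₀ z * (Ω₀ z + z * ξ₀ z) - -(n : ℝ) * Ψ₀ z * ξ₀ z) := by
    rw [pow_succ _ (n + 1)]
    field_simp
    ring
  rw [← sub_eq_zero, hdiff, mul_eq_zero, or_iff_right hscale, sub_eq_zero]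

theorem stmt_1_general (n : ℕ) (I : Set ℝ)
    (Ψ₀ Ω₀ ξ₀ : ℝ → ℝ)
    (hΨ : ∀ z ∈ I, DifferentiableAt ℝ Ψ₀ z)
    (hcons : ∀ τ ρ : ℝ, 0 < ρ → τ / ρ ∈ I →
      deriv (fun t => Ψ₀ (t / ρ) / ρ ^ n) τ * (Ω₀ (τ / ρ) / ρ) =
      deriv (fun r => Ψ₀ (τ / r) / r ^ n) ρ * (ξ₀ (τ / ρ) / ρ)) :
    ∀ z ∈ I, deriv Ψ₀ z * (Ω₀ z + z * ξ₀ z) = -(n : ℝ) * Ψ₀ z * ξ₀ z ∧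
      (Ψ₀ z ≠ 0 → Ω₀ z + z * ξ₀ z ≠ 0 →
        deriv Ψ₀ z / Ψ₀ z = -(n : ℝ) * ξ₀ z / (Ω₀ z + z * ξ₀ z)) := by
  intro z hz
  have hz1 : z / 1 ∈ I := by rwa [div_one]
  have hode := (selfSimilar_consistency_iff one_ne_zero (hΨ _ hz1)).1 (hcons z 1 one_pos hz1)
  rw [div_one] at hode
  refine ⟨hode, fun hΨz hden => ?_⟩
  rw [div_eq_div_iff hΨz hden, hode]
  ring

/-- If the self-similar scalar `Ψ(τ,ρ) = Ψ₀(τ/ρ)/ρ^n` satisfies the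
consistency relation `Ψ̇ Ω = Ψ̂ ξ` with `Ω(τ,ρ) = Ω₀(τ/ρ)/ρ` and `ξ(τ,ρ) = ξ₀(τ/ρ)/ρ`,
then `Ψ₀′(z)·(Ω₀(z) + z ξ₀(z)) = −n Ψ₀(z) ξ₀(z)` on the interval `I`; in particular,
where `Ψ₀ ≠ 0` and `Ω₀ + z ξ₀ ≠ 0`, `Ψ₀′/Ψ₀ = −n ξ₀/(Ω₀ + z ξ₀)`. -/
theorem stmt_1 (n : ℕ) (I : Set ℝ) (hI : I.OrdConnected)
    (Ψ₀ Ω₀ ξ₀ : ℝ → ℝ)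
    (hΨ : ∀ z ∈ I, DifferentiableAt ℝ Ψ₀ z)
    (hΩ : ∀ z ∈ I, DifferentiableAt ℝ Ω₀ z)
    (hξ : ∀ z ∈ I, DifferentiableAt ℝ ξ₀ z)
    (hcons : ∀ τ ρ : ℝ, 0 < ρ → τ / ρ ∈ I →
      deriv (fun t => Ψ₀ (t / ρ) / ρ ^ n) τ * (Ω₀ (τ / ρ) / ρ) =
      deriv (fun r => Ψ₀ (τ / r) / r ^ n) ρ * (ξ₀ (τ / ρ) / ρ)) :
    ∀ z ∈ I, deriv Ψ₀ z * (Ω₀ z + z * ξ₀ z) = -(n : ℝ) * Ψ₀ z * ξ₀ z ∧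
      (Ψ₀ z ≠ 0 → Ω₀ z + z * ξ₀ z ≠ 0 →
        deriv Ψ₀ z / Ψ₀ z = -(n : ℝ) * ξ₀ z / (Ω₀ z + z * ξ₀ z)) :=
  stmt_1_general n I Ψ₀ Ω₀ ξ₀ hΨ hcons
end

section
/- Let I ⊆ ℝ be an interval and let Ω₀, ξ₀ : ℝ → ℝ be differentiable on I with ξ₀(z) ≠ 0 and Ω₀(z) + z·ξ₀(z) ≠ 0 for all z ∈ I, satisfying the coupled system Ω₀′(z) = −ξ₀(z)·Ω₀(z)/(Ω₀(z) + z·ξ₀(z)) and ξ₀′(z) = −ξ₀(z)²/(Ω₀(z) + z·ξ₀(z)) on I. Then the ratio Ω₀/ξ₀ is constant on I; that is, there exists k ∈ ℝ such that Ω₀(z) = k·ξ₀(z) for all z ∈ I. -/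
/-!
Both equations have the same right-hand side up to the factors `Ω₀` and `ξ₀`, so the Wronskian
`Ω₀′ ξ₀ - Ω₀ ξ₀′` vanishes identically; hence `(Ω₀ / ξ₀)′ = 0` wherever `ξ₀ ≠ 0`, and the ratio is
constant on the interval by the mean value inequality.
-/

variable {𝕜 : Type*} [RCLike 𝕜]

theorem HasDerivAt.div_of_deriv_mul_eq {f g : 𝕜 → 𝕜} {f' g' z : 𝕜} (hf : HasDerivAt f f' z)
    (hg : HasDerivAt g g' z) (hgz : g z ≠ 0) (hw : f' * g z = f z * g') :
    HasDerivAt (fun x => f x / g x) 0 z :=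
  (hf.div hg hgz).congr_deriv (by rw [hw, sub_self, zero_div])

theorem Convex.exists_eq_const_mul_of_deriv_mul_eq {s : Set 𝕜} (hs : Convex ℝ s) {f g : 𝕜 → 𝕜}
    (hf : ∀ z ∈ s, DifferentiableAt 𝕜 f z) (hg : ∀ z ∈ s, DifferentiableAt 𝕜 g z)
    (hg₀ : ∀ z ∈ s, g z ≠ 0) (hw : ∀ z ∈ s, deriv f z * g z = f z * deriv g z) :
    ∃ k : 𝕜, ∀ z ∈ s, f z = k * g z := by
  rcases s.eq_empty_or_nonempty with rfl | ⟨x₀, hx₀⟩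
  · exact ⟨0, fun z hz => hz.elim⟩
  have hratio : ∀ z ∈ s, HasDerivAt (fun x => f x / g x) 0 z := fun z hz =>
    (hf z hz).hasDerivAt.div_of_deriv_mul_eq (hg z hz).hasDerivAt (hg₀ z hz) (hw z hz)
  refine ⟨f x₀ / g x₀, fun z hz => ?_⟩
  have hconst : ‖f z / g z - f x₀ / g x₀‖ ≤ 0 * ‖z - x₀‖ :=
    hs.norm_image_sub_le_of_norm_deriv_le (fun x hx => (hratio x hx).differentiableAt)
      (fun x hx => by rw [(hratio x hx).deriv, norm_zero]) hx₀ hz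
  rw [zero_mul, norm_le_zero_iff, sub_eq_zero] at hconst
  rw [← hconst, div_mul_cancel₀ _ (hg₀ z hz)]

theorem stmt_2_general (I : Set ℝ) (hI : I.OrdConnected) (Ω₀ ξ₀ : ℝ → ℝ)
    (hΩd : ∀ z ∈ I, DifferentiableAt ℝ Ω₀ z)
    (hξd : ∀ z ∈ I, DifferentiableAt ℝ ξ₀ z)
    (hξ : ∀ z ∈ I, ξ₀ z ≠ 0)
    (hΩ' : ∀ z ∈ I, deriv Ω₀ z = -ξ₀ z * Ω₀ z / (Ω₀ z + z * ξ₀ z))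
    (hξ' : ∀ z ∈ I, deriv ξ₀ z = -(ξ₀ z) ^ 2 / (Ω₀ z + z * ξ₀ z)) :
    ∃ k : ℝ, ∀ z ∈ I, Ω₀ z = k * ξ₀ z := by
  refine hI.convex.exists_eq_const_mul_of_deriv_mul_eq hΩd hξd hξ fun z hz => ?_
  rw [hΩ' z hz, hξ' z hz]
  ring

/-- The coupled system `Ω₀′ = −ξ₀ Ω₀/(Ω₀ + z ξ₀)`,
`ξ₀′ = −ξ₀²/(Ω₀ + z ξ₀)` on an interval (with `ξ₀ ≠ 0` and `Ω₀ + z ξ₀ ≠ 0`)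
forces the ratio `Ω₀/ξ₀` to be constant: `Ω₀ = k ξ₀` for some `k`. -/
theorem stmt_2 (I : Set ℝ) (hI : I.OrdConnected) (Ω₀ ξ₀ : ℝ → ℝ)
    (hΩd : ∀ z ∈ I, DifferentiableAt ℝ Ω₀ z)
    (hξd : ∀ z ∈ I, DifferentiableAt ℝ ξ₀ z)
    (hξ : ∀ z ∈ I, ξ₀ z ≠ 0)
    (hden : ∀ z ∈ I, Ω₀ z + z * ξ₀ z ≠ 0)
    (hΩ' : ∀ z ∈ I, deriv Ω₀ z = -ξ₀ z * Ω₀ z / (Ω₀ z + z * ξ₀ z))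
    (hξ' : ∀ z ∈ I, deriv ξ₀ z = -(ξ₀ z) ^ 2 / (Ω₀ z + z * ξ₀ z)) :
    ∃ k : ℝ, ∀ z ∈ I, Ω₀ z = k * ξ₀ z :=
  stmt_2_general I hI Ω₀ ξ₀ hΩd hξd hξ hΩ' hξ'
end

section
/- Let I ⊆ ℝ be a nondegenerate open interval and let Ω₀, ξ₀ : ℝ → ℝ be differentiable on I with ξ₀(z) ≠ 0, Ω₀(z) ≠ 0, and Ω₀(z) + z·ξ₀(z) ≠ 0 for all z ∈ I, satisfying Ω₀′(z) = −ξ₀(z)·Ω₀(z)/(Ω₀(z) + z·ξ₀(z)) and ξ₀′(z) = −ξ₀(z)²/(Ω₀(z) + z·ξ₀(z)) on I. Then there exist real constants A ≠ 0 and B ≠ 0 such that A·z + B ≠ 0 for all z ∈ I and ξ₀(z) = −1/(A·z + B), Ω₀(z) = −B/(A·(A·z + B)) for all z ∈ I. -/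
/-! The combination `Ω₀ + z ξ₀` is a first integral of the system: its derivative is
`-ξ₀ (Ω₀ + z ξ₀)/(Ω₀ + z ξ₀) + ξ₀ = 0`. Calling its value `K`, the second equation becomes the
Riccati equation `ξ₀′ = -ξ₀²/K`, so `1/ξ₀` is affine with slope `1/K`; then `Ω₀ = K - z ξ₀`. -/

theorem IsOpen.exists_eq_of_hasDerivAt_zero {𝕜 G : Type*} [RCLike 𝕜] [NormedAddCommGroup G]
    [NormedSpace 𝕜 G] {s : Set 𝕜} (hs : IsOpen s) (hs' : IsPreconnected s) {f : 𝕜 → G}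
    (hf : ∀ x ∈ s, HasDerivAt f 0 x) : ∃ a, ∀ x ∈ s, f x = a :=
  hs.exists_is_const_of_deriv_eq_zero hs'
    (fun x hx => (hf x hx).differentiableAt.differentiableWithinAt)
    (fun x hx => (hf x hx).deriv)

theorem hasDerivAt_add_mul_eq_zero_of_ode {Ω₀ ξ₀ : ℝ → ℝ} {z : ℝ}
    (hΩ : HasDerivAt Ω₀ (-ξ₀ z * Ω₀ z / (Ω₀ z + z * ξ₀ z)) z)
    (hξ : HasDerivAt ξ₀ (-(ξ₀ z) ^ 2 / (Ω₀ z + z * ξ₀ z)) z)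
    (hden : Ω₀ z + z * ξ₀ z ≠ 0) :
    HasDerivAt (fun z => Ω₀ z + z * ξ₀ z) 0 z := by
  refine (hΩ.add ((hasDerivAt_id z).mul hξ)).congr_deriv ?_
  simp only [id, one_mul]
  calc -ξ₀ z * Ω₀ z / (Ω₀ z + z * ξ₀ z) + (ξ₀ z + z * (-ξ₀ z ^ 2 / (Ω₀ z + z * ξ₀ z)))
      = ξ₀ z - ξ₀ z * ((Ω₀ z + z * ξ₀ z) / (Ω₀ z + z * ξ₀ z)) := by ring
    _ = 0 := by rw [div_self hden]; ring

theorem hasDerivAt_inv_of_hasDerivAt_neg_sq_div {f : ℝ → ℝ} {K z : ℝ}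
    (hf : HasDerivAt f (-(f z) ^ 2 / K) z) (hfz : f z ≠ 0) :
    HasDerivAt (fun z => (f z)⁻¹) K⁻¹ z := by
  refine (hf.inv hfz).congr_deriv ?_
  field_simp

theorem eq_of_inv_eq_neg_affine {A B z x y : ℝ} (hA : A ≠ 0) (hx : x ≠ 0)
    (hinv : x⁻¹ = -(A * z + B)) (hy : y + z * x = -A⁻¹) :
    A * z + B ≠ 0 ∧ x = -1 / (A * z + B) ∧ y = -B / (A * (A * z + B)) := by
  have hAB : A * z + B = -x⁻¹ := by rw [hinv, neg_neg]
  refine ⟨by simpa [hAB] using hx, by rw [hAB]; field_simp, ?_⟩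
  rw [hAB, show y = -A⁻¹ - z * x by linarith, show B = -x⁻¹ - A * z by linarith]
  field_simp

/-- On a nondegenerate open interval, the coupled system
`Ω₀′ = −ξ₀ Ω₀/(Ω₀ + z ξ₀)`, `ξ₀′ = −ξ₀²/(Ω₀ + z ξ₀)` (with `ξ₀, Ω₀, Ω₀ + z ξ₀`
nowhere vanishing) has the general solution `ξ₀ = −1/(Az+B)`,
`Ω₀ = −B/(A(Az+B))` with integration constants `A ≠ 0`, `B ≠ 0`. -/
theorem stmt_3 (I : Set ℝ) (hIo : IsOpen I) (hI : I.OrdConnected) (hne : I.Nonempty)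
    (Ω₀ ξ₀ : ℝ → ℝ)
    (hΩd : ∀ z ∈ I, DifferentiableAt ℝ Ω₀ z)
    (hξd : ∀ z ∈ I, DifferentiableAt ℝ ξ₀ z)
    (hξ : ∀ z ∈ I, ξ₀ z ≠ 0)
    (hΩ : ∀ z ∈ I, Ω₀ z ≠ 0)
    (hden : ∀ z ∈ I, Ω₀ z + z * ξ₀ z ≠ 0)
    (hΩ' : ∀ z ∈ I, deriv Ω₀ z = -ξ₀ z * Ω₀ z / (Ω₀ z + z * ξ₀ z))
    (hξ' : ∀ z ∈ I, deriv ξ₀ z = -(ξ₀ z) ^ 2 / (Ω₀ z + z * ξ₀ z)) :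
    ∃ A B : ℝ, A ≠ 0 ∧ B ≠ 0 ∧ (∀ z ∈ I, A * z + B ≠ 0) ∧
      (∀ z ∈ I, ξ₀ z = -1 / (A * z + B)) ∧
      (∀ z ∈ I, Ω₀ z = -B / (A * (A * z + B))) := by
  obtain ⟨z₀, hz₀⟩ := hne
  have hpre := hI.isPreconnected
  have hΩode : ∀ z ∈ I, HasDerivAt Ω₀ _ z := fun z hz => hΩ' z hz ▸ (hΩd z hz).hasDerivAt
  have hξode : ∀ z ∈ I, HasDerivAt ξ₀ _ z := fun z hz => hξ' z hz ▸ (hξd z hz).hasDerivAt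
  obtain ⟨K, hK⟩ := hIo.exists_eq_of_hasDerivAt_zero hpre fun z hz =>
    hasDerivAt_add_mul_eq_zero_of_ode (hΩode z hz) (hξode z hz) (hden z hz)
  have hK0 : K ≠ 0 := hK z₀ hz₀ ▸ hden z₀ hz₀
  obtain ⟨a, ha⟩ := hIo.exists_eq_of_hasDerivAt_zero hpre (f := fun z => (ξ₀ z)⁻¹ - K⁻¹ * z)
    fun z hz => by
    have hinv := hasDerivAt_inv_of_hasDerivAt_neg_sq_div (hK z hz ▸ hξode z hz) (hξ z hz)
    simpa using hinv.fun_sub ((hasDerivAt_id z).const_mul K⁻¹)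
  have hsol : ∀ z ∈ I, -K⁻¹ * z + -a ≠ 0 ∧ ξ₀ z = -1 / (-K⁻¹ * z + -a) ∧
      Ω₀ z = -(-a) / (-K⁻¹ * (-K⁻¹ * z + -a)) := fun z hz =>
    eq_of_inv_eq_neg_affine (by simpa using hK0) (hξ z hz)
      (by linarith [ha z hz]) (by simpa using hK z hz)
  refine ⟨-K⁻¹, -a, by simpa using hK0, fun ha0 => hΩ z₀ hz₀ ?_,
    fun z hz => (hsol z hz).1, fun z hz => (hsol z hz).2.1, fun z hz => (hsol z hz).2.2⟩
  rw [(hsol z₀ hz₀).2.2, ha0, neg_zero, zero_div]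
end

section
/- (Proposition: any dimensionless scalar in a simultaneously rotating and twisting LRS spacetime is constant.) Let I ⊆ ℝ be an interval, let Ψ₀, Ω₀, ξ₀ : ℝ → ℝ with Ψ₀ differentiable on I and Ω₀(z) + z·ξ₀(z) ≠ 0 for all z ∈ I. Define, for τ ∈ ℝ and ρ > 0 with τ/ρ ∈ I, the dimensionless scalar Ψ(τ,ρ) = Ψ₀(τ/ρ) and the scalars Ω(τ,ρ) = Ω₀(τ/ρ)/ρ, ξ(τ,ρ) = ξ₀(τ/ρ)/ρ. If the consistency relation (∂Ψ/∂τ)(τ,ρ) · Ω(τ,ρ) = (∂Ψ/∂ρ)(τ,ρ) · ξ(τ,ρ) holds for all such (τ,ρ), then Ψ₀ is constant on I. -/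
/-!
A dimensionless scalar `Ψ(τ, ρ) = Ψ₀(τ / ρ)` is homogeneous of degree zero, so it satisfies
Euler's relation `τ Ψ̇ + ρ Ψ̂ = 0`. At `ρ = 1` this gives `Ψ̂ = -z Ψ₀'(z)` with `z = τ`, and the
consistency relation `Ψ̇ Ω = Ψ̂ ξ` becomes `Ψ₀'(z) (Ω₀(z) + z ξ₀(z)) = 0`. Hence `Ψ₀'` vanishes
on the interval `I`, and `Ψ₀` is constant there by the mean value theorem.
-/

section Homogeneous

variable {𝕜 E : Type*} [NontriviallyNormedField 𝕜] [NormedAddCommGroup E] [NormedSpace 𝕜 E]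

theorem deriv_comp_div_const (f : 𝕜 → E) (ρ τ : 𝕜) :
    deriv (fun t => f (t / ρ)) τ = ρ⁻¹ • deriv f (τ / ρ) := by
  simp_rw [div_eq_inv_mul]
  exact deriv_comp_mul_left ρ⁻¹ f τ

theorem HasDerivAt.comp_const_div {f : 𝕜 → E} {f' : E} {τ ρ : 𝕜}
    (hf : HasDerivAt f f' (τ / ρ)) (hρ : ρ ≠ 0) :
    HasDerivAt (fun r => f (τ / r)) (-(τ / ρ ^ 2) • f') ρ := by
  have hdiv : HasDerivAt (fun r => τ / r) (-(τ / ρ ^ 2)) ρ := by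
    simpa [div_eq_mul_inv] using (hasDerivAt_inv hρ).const_mul τ
  exact hf.scomp ρ hdiv

theorem smul_deriv_comp_div_const_add_smul_deriv_comp_const_div {f : 𝕜 → E} {τ ρ : 𝕜}
    (hf : DifferentiableAt 𝕜 f (τ / ρ)) (hρ : ρ ≠ 0) :
    τ • deriv (fun t => f (t / ρ)) τ + ρ • deriv (fun r => f (τ / r)) ρ = 0 := by
  rw [deriv_comp_div_const, (hf.hasDerivAt.comp_const_div hρ).deriv, smul_smul, smul_smul,
    ← add_smul]
  have hcoeff : τ * ρ⁻¹ + ρ * -(τ / ρ ^ 2) = 0 := by field_simp; ring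
  rw [hcoeff, zero_smul]

end Homogeneous

theorem Convex.exists_eq_const_of_deriv_eq_zero {𝕜 G : Type*} [RCLike 𝕜] [NormedAddCommGroup G]
    [NormedSpace 𝕜 G] {s : Set 𝕜} (hs : Convex ℝ s) {f : 𝕜 → G}
    (hf : ∀ x ∈ s, DifferentiableAt 𝕜 f x) (hf' : ∀ x ∈ s, deriv f x = 0) :
    ∃ c, ∀ x ∈ s, f x = c := by
  rcases s.eq_empty_or_nonempty with rfl | ⟨x₀, hx₀⟩
  · exact ⟨0, by simp⟩
  refine ⟨f x₀, fun x hx => ?_⟩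
  have hlip := hs.norm_image_sub_le_of_norm_deriv_le (C := 0) hf
    (fun y hy => by simp [hf' y hy]) hx₀ hx
  simpa [sub_eq_zero] using hlip

/-- Proposition: any dimensionless scalar `Ψ(τ,ρ) = Ψ₀(τ/ρ)` in a
simultaneously rotating and twisting LRS spacetime (i.e. satisfying the consistency
relation `Ψ̇ Ω = Ψ̂ ξ` with `Ω = Ω₀(τ/ρ)/ρ`, `ξ = ξ₀(τ/ρ)/ρ` and `Ω₀ + z ξ₀ ≠ 0`)
must be constant. -/
theorem stmt_5 (I : Set ℝ) (hI : I.OrdConnected) (Ψ₀ Ω₀ ξ₀ : ℝ → ℝ)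
    (hΨ : ∀ z ∈ I, DifferentiableAt ℝ Ψ₀ z)
    (hden : ∀ z ∈ I, Ω₀ z + z * ξ₀ z ≠ 0)
    (hcons : ∀ τ ρ : ℝ, 0 < ρ → τ / ρ ∈ I →
      deriv (fun t => Ψ₀ (t / ρ)) τ * (Ω₀ (τ / ρ) / ρ) =
      deriv (fun r => Ψ₀ (τ / r)) ρ * (ξ₀ (τ / ρ) / ρ)) :
    ∃ c : ℝ, ∀ z ∈ I, Ψ₀ z = c := by
  refine hI.convex.exists_eq_const_of_deriv_eq_zero hΨ fun z hz => ?_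
  have hz₁ : z / 1 ∈ I := by rwa [div_one]
  have hEuler := smul_deriv_comp_div_const_add_smul_deriv_comp_const_div (hΨ _ hz₁) one_ne_zero
  have hrel := hcons z 1 one_pos hz₁
  simp only [div_one, smul_eq_mul, one_mul] at hEuler hrel
  have hfactor : deriv Ψ₀ z * (Ω₀ z + z * ξ₀ z) = 0 := by
    linear_combination hrel + ξ₀ z * hEuler
  exact (mul_eq_zero.1 hfactor).resolve_right (hden z hz)
end

section
/- (Constraint C₂.) Let 𝒜, Θ, Ω, ξ, Σ, φ, Ωdot, Ωhat be real numbers with Ω ≠ 0 and ξ ≠ 0, satisfying the LRS field equations for the rotation, Ωdot = 𝒜·ξ + Ω·(Σ − (2/3)·Θ) and Ωhat = (𝒜 − φ)·Ω, together with the consistency relation Ωdot·Ω = Ωhat·ξ. Then φ = −(Ω/ξ)·(Σ − (2/3)·Θ). -/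
/-!
Substituting the two rotation equations into `Ω̇ Ω = Ω̂ ξ`, the acceleration terms `𝒜 ξ Ω`
cancel and what is left is `Ω² (Σ − (2/3)Θ) = −φ Ω ξ`; dividing by `Ω ξ` gives `φ`.
-/

theorem eq_neg_div_mul_of_consistency {K : Type*} [Field K] {a s φ Ω ξ : K}
    (hΩ : Ω ≠ 0) (hξ : ξ ≠ 0) (h : (a * ξ + Ω * s) * Ω = ((a - φ) * Ω) * ξ) :
    φ = -(Ω / ξ) * s := by
  have hs : Ω * s = -φ * ξ := mul_left_cancel₀ hΩ (by linear_combination h)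
  field_simp
  linear_combination hs

/-- Constraint C₂: from the evolution and propagation equations for
the rotation, `Ω̇ = 𝒜ξ + Ω(Σ − (2/3)Θ)` and `Ω̂ = (𝒜 − φ)Ω`, together with the
consistency relation `Ω̇ Ω = Ω̂ ξ` (and `Ω ≠ 0`, `ξ ≠ 0`), one gets
`φ = −(Ω/ξ)(Σ − (2/3)Θ)`. -/
theorem stmt_6 (A Th Om xi Sg ph Omdot Omhat : ℝ)
    (hOm : Om ≠ 0) (hxi : xi ≠ 0)
    (h1 : Omdot = A * xi + Om * (Sg - (2/3) * Th))
    (h2 : Omhat = (A - ph) * Om)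
    (h3 : Omdot * Om = Omhat * xi) :
    ph = -(Om / xi) * (Sg - (2/3) * Th) := by
  subst h1 h2
  exact eq_neg_div_mul_of_consistency hOm hxi h3
end

section
/- (Constraint C₁.) Let 𝒜, Θ, Ω, ξ, Σ, φ, ℋ, ξdot, ξhat be real numbers with Ω ≠ 0 and ξ ≠ 0, satisfying the LRS field equations for the twist, ξdot = ((1/2)·Σ − (1/3)·Θ)·ξ + (𝒜 − (1/2)·φ)·Ω + (1/2)·ℋ and ξhat = −φ·ξ + ((1/3)·Θ + Σ)·Ω, the consistency relation ξdot·Ω = ξhat·ξ, and the constraint φ·ξ = −Ω·(Σ − (2/3)·Θ). Then ℋ = 3·ξ·Σ − (2·𝒜 + (Ω/ξ)·(Σ − (2/3)·Θ))·Ω. -/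
/-- Constraint C₁: from the evolution and propagation equations for
the twist, `ξ̇ = ((1/2)Σ − (1/3)Θ)ξ + (𝒜 − (1/2)φ)Ω + (1/2)ℋ` and
`ξ̂ = −φξ + ((1/3)Θ + Σ)Ω`, together with the consistency relation `ξ̇ Ω = ξ̂ ξ`
and the constraint `φξ = −Ω(Σ − (2/3)Θ)` (and `Ω ≠ 0`, `ξ ≠ 0`), one gets
`ℋ = 3ξΣ − (2𝒜 + (Ω/ξ)(Σ − (2/3)Θ))Ω`. -/
theorem stmt_7 (A Th Om xi Sg ph H xidot xihat : ℝ)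
    (hOm : Om ≠ 0) (hxi : xi ≠ 0)
    (h1 : xidot = ((1/2) * Sg - (1/3) * Th) * xi + (A - (1/2) * ph) * Om + (1/2) * H)
    (h2 : xihat = -ph * xi + ((1/3) * Th + Sg) * Om)
    (h3 : xidot * Om = xihat * xi)
    (hC2 : ph * xi = -Om * (Sg - (2/3) * Th)) :
    H = 3 * xi * Sg - (2 * A + (Om / xi) * (Sg - (2/3) * Th)) * Om := by
  subst h1 h2
  -- C₂ turns the term `-φξ²` of `ξ̂ξ` into a multiple of `Ω`, so `Ω` can be cancelled.
  have hH : H = 3 * xi * Sg - 2 * A * Om + ph * Om := by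
    apply mul_left_cancel₀ hOm
    linear_combination 2 * h3 - 2 * xi * hC2
  have hph : ph = -(Om / xi) * (Sg - (2/3) * Th) := by
    rw [← mul_div_cancel_right₀ ph hxi, hC2]
    ring
  rw [hH, hph]
  ring
end

section
/- (Constraint C₃.) Let Θ, Ω, ξ, Σ, φ, ℰ, ℋ, μ, p, Q, Π, ℋdot, ℋhat be real numbers with Ω ≠ 0 and ξ ≠ 0, satisfying the LRS field equations ℋdot = −3·ξ·ℰ + ((3/2)·Σ − Θ)·ℋ + Ω·Q + (3/2)·ξ·Π and ℋhat = −(3·ℰ + μ + p − (1/2)·Π)·Ω − (3/2)·φ·ℋ − ξ·Q, the consistency relation ℋdot·Ω = ℋhat·ξ, and the constraint φ·ξ = −Ω·(Σ − (2/3)·Θ). Then Q·(Ω² + ξ²) = −Ω·ξ·(μ + p + Π); equivalently Q = −((Ω/ξ)/(1 + (Ω/ξ)²))·(μ + p + Π). -/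
/-! Inserting the evolution and propagation equations of `ℋ` into `ℋ̇ Ω = ℋ̂ ξ`, the `ℰ` terms
cancel, the two `Π` terms combine with `μ + p`, and the `ℋ` terms add up to `(3/2) ℋ` times the
constraint C₂, so they vanish as well. What remains is linear in `Q`; dividing by `ξ²` gives the
form in terms of `Ω/ξ`. -/

theorem heat_flux_mul_sq_add_sq {Th Om xi Sg ph E H mu p Q Pi : ℝ}
    (hcons : (-3 * xi * E + ((3/2) * Sg - Th) * H + Om * Q + (3/2) * xi * Pi) * Om =
      (-(3 * E + mu + p - (1/2) * Pi) * Om - (3/2) * ph * H - xi * Q) * xi)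
    (hC2 : ph * xi = -Om * (Sg - (2/3) * Th)) :
    Q * (Om ^ 2 + xi ^ 2) = -Om * xi * (mu + p + Pi) := by
  linear_combination hcons - (3/2) * H * hC2

theorem eq_neg_div_one_add_sq_mul {Om xi Q S : ℝ} (hxi : xi ≠ 0)
    (h : Q * (Om ^ 2 + xi ^ 2) = -Om * xi * S) :
    Q = -((Om / xi) / (1 + (Om / xi) ^ 2)) * S := by
  have hden : Om ^ 2 + xi ^ 2 ≠ 0 := by positivity
  field_simp
  linear_combination h

theorem stmt_8_general (Th Om xi Sg ph E H mu p Q Pi Hdot Hhat : ℝ)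
    (hxi : xi ≠ 0)
    (h1 : Hdot = -3 * xi * E + ((3/2) * Sg - Th) * H + Om * Q + (3/2) * xi * Pi)
    (h2 : Hhat = -(3 * E + mu + p - (1/2) * Pi) * Om - (3/2) * ph * H - xi * Q)
    (h3 : Hdot * Om = Hhat * xi)
    (hC2 : ph * xi = -Om * (Sg - (2/3) * Th)) :
    Q * (Om ^ 2 + xi ^ 2) = -Om * xi * (mu + p + Pi) ∧
      Q = -((Om / xi) / (1 + (Om / xi) ^ 2)) * (mu + p + Pi) := by
  subst h1 h2
  have hC3 := heat_flux_mul_sq_add_sq h3 hC2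
  exact ⟨hC3, eq_neg_div_one_add_sq_mul hxi hC3⟩

/-- Constraint C₃: from the evolution and propagation equations for
the magnetic Weyl scalar, `ℋ̇ = −3ξℰ + ((3/2)Σ − Θ)ℋ + ΩQ + (3/2)ξΠ` and
`ℋ̂ = −(3ℰ + μ + p − (1/2)Π)Ω − (3/2)φℋ − ξQ`, with the consistency relation
`ℋ̇ Ω = ℋ̂ ξ` and the constraint `φξ = −Ω(Σ − (2/3)Θ)` (and `Ω ≠ 0`, `ξ ≠ 0`),
one gets `Q(Ω² + ξ²) = −Ωξ(μ + p + Π)`, equivalently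
`Q = −((Ω/ξ)/(1 + (Ω/ξ)²))(μ + p + Π)`. -/
theorem stmt_8 (Th Om xi Sg ph E H mu p Q Pi Hdot Hhat : ℝ)
    (hOm : Om ≠ 0) (hxi : xi ≠ 0)
    (h1 : Hdot = -3 * xi * E + ((3/2) * Sg - Th) * H + Om * Q + (3/2) * xi * Pi)
    (h2 : Hhat = -(3 * E + mu + p - (1/2) * Pi) * Om - (3/2) * ph * H - xi * Q)
    (h3 : Hdot * Om = Hhat * xi)
    (hC2 : ph * xi = -Om * (Sg - (2/3) * Th)) :
    Q * (Om ^ 2 + xi ^ 2) = -Om * xi * (mu + p + Pi) ∧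
      Q = -((Om / xi) / (1 + (Om / xi) ^ 2)) * (mu + p + Pi) :=
  stmt_8_general Th Om xi Sg ph E H mu p Q Pi Hdot Hhat hxi h1 h2 h3 hC2
end
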